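/- Let C ⊂ ℝⁿ be compact, f : C → ℝ bounded, and g(x,y) = α‖y − x‖ with α ≥ 1. For x in the interior of C and y ∈ C with y ≠ x, if y is a maximizer of z ↦ f(z) − α‖z − x‖ over C, then the one-sided directional derivative of the value function V at x in direction y − x exists and equals α‖y − x‖. -/
import Mathlib


open Set Filter

theorem directional_derivative_toward_maximizer {n : ℕ}
    (C : Set (EuclideanSpace ℝ (Fin n))) (hC : IsCompact C)
    (f : EuclideanSpace ℝ (Fin n) → ℝ) (M : ℝ) (hf : ∀ y ∈ C, |f y| ≤ M)
    (α : ℝ) (hα : 1 ≤ α)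
    (x : EuclideanSpace ℝ (Fin n)) (hx : x ∈ interior C)
    (y : EuclideanSpace ℝ (Fin n)) (hy : y ∈ C) (hxy : y ≠ x)
    (hmax : IsMaxOn (fun z => f z - α * ‖z - x‖) C y)
    (V : EuclideanSpace ℝ (Fin n) → ℝ)
    (hV : ∀ z, V z = sSup ((fun w => f w - α * ‖w - z‖) '' C)) :
    Tendsto (fun t : ℝ => (V (x + t • (y - x)) - V x) / t)
      (nhdsWithin 0 (Set.Ioi 0)) (nhds (α * ‖y - x‖)) := by
  have hα0 : 0 ≤ α := le_trans zero_le_one hα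
  have hbdd : ∀ z, BddAbove ((fun w => f w - α * ‖w - z‖) '' C) := by
    intro z
    refine ⟨M, ?_⟩
    rintro _ ⟨w, hw, rfl⟩
    have h1 := (abs_le.mp (hf w hw)).2
    have h2 := norm_nonneg (w - z)
    simp only
    nlinarith
  have hVx : V x = f y - α * ‖y - x‖ := by
    rw [hV x]
    apply IsGreatest.csSup_eq
    constructor
    · exact ⟨y, hy, rfl⟩
    · rintro _ ⟨w, hw, rfl⟩
      exact hmax hw
  -- Lipschitz upper bound
  have hup : ∀ z, V z ≤ V x + α * ‖z - x‖ := by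
    intro z
    rw [hV z]
    apply csSup_le ((Set.nonempty_of_mem hy).image _)
    rintro _ ⟨w, hw, rfl⟩
    have h1 : f w - α * ‖w - x‖ ≤ V x := by
      rw [hV x]; exact le_csSup (hbdd x) ⟨w, hw, rfl⟩
    have h2 : ‖w - x‖ ≤ ‖w - z‖ + ‖z - x‖ := norm_sub_le_norm_sub_add_norm_sub w z x
    simp only at h1 ⊢
    nlinarith
  have key : ∀ t ∈ Ioc (0:ℝ) 1, (V (x + t • (y - x)) - V x) / t = α * ‖y - x‖ := by
    intro t ht
    have ht0 := ht.1
    have hnorm : ‖y - (x + t • (y - x))‖ = (1 - t) * ‖y - x‖ := by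
      have : y - (x + t • (y - x)) = (1 - t) • (y - x) := by
        module
      rw [this, norm_smul, Real.norm_eq_abs, abs_of_nonneg (by linarith [ht.2])]
    have hlow : V x + t * (α * ‖y - x‖) ≤ V (x + t • (y - x)) := by
      rw [hV (x + t • (y - x))]
      have : f y - α * ‖y - (x + t • (y - x))‖ ∈
          (fun w => f w - α * ‖w - (x + t • (y - x))‖) '' C := ⟨y, hy, rfl⟩
      have h := le_csSup (hbdd _) this
      rw [hnorm] at h
      rw [hVx]
      nlinarith
    have hup' : V (x + t • (y - x)) ≤ V x + t * (α * ‖y - x‖) := by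
      have := hup (x + t • (y - x))
      have hn : ‖x + t • (y - x) - x‖ = t * ‖y - x‖ := by
        have : x + t • (y - x) - x = t • (y - x) := by module
        rw [this, norm_smul, Real.norm_eq_abs, abs_of_pos ht0]
      rw [hn] at this
      nlinarith
    have : V (x + t • (y - x)) - V x = t * (α * ‖y - x‖) := le_antisymm (by linarith) (by linarith)
    rw [this]
    field_simp
  have hev : ∀ᶠ t in nhdsWithin (0:ℝ) (Ioi 0),
      (fun t : ℝ => (V (x + t • (y - x)) - V x) / t) t = α * ‖y - x‖ := by
    filter_upwards [Ioo_mem_nhdsGT_of_mem (by norm_num : (0:ℝ) ∈ Ico (0:ℝ) 1)] with t ht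
    exact key t ⟨ht.1, le_of_lt ht.2⟩
  exact Tendsto.congr' (Filter.EventuallyEq.symm hev) tendsto_const_nhds
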